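/- Let F be a field and A = F[T] the polynomial ring over F. Let i₁, i₂ ∈ A be nonzero polynomials with i₂ ∣ i₁, and set χ = i₁·i₂. Let M be a 2×2 matrix with entries in A/(χ) such that M fixes the two vectors v₁ = (i₁ mod χ, 0) and v₂ = (0, i₂ mod χ), i.e. M·v₁ = v₁ and M·v₂ = v₂. If c ∈ A is a polynomial whose residue class modulo χ equals the trace of M, then i₂ divides c − 2 in A. -/

import Mathlib

/-!
Lift the diagonal entries of `M` to `a, d ∈ A`. Fixing `(i₁, 0)` gives `i₁ * i₂ ∣ (a - 1) * i₁`, so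
`i₂ ∣ a - 1`; fixing `(0, i₂)` gives `i₁ ∣ d - 1`, hence `i₂ ∣ d - 1` as `i₂ ∣ i₁`. Since `c ≡ a + d`
modulo `χ`, and so modulo `i₂`, we get `c ≡ 2` modulo `i₂`.
-/

open Polynomial

namespace Matrix

variable {R : Type*} [NonUnitalNonAssocSemiring R] (M : Matrix (Fin 2) (Fin 2) R)

theorem apply_zero_zero_mul_of_mulVec_eq {u : R} (h : M *ᵥ ![u, 0] = ![u, 0]) :
    M 0 0 * u = u := by
  simpa [mulVec, dotProduct, Fin.sum_univ_two] using congrFun h 0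

theorem apply_one_one_mul_of_mulVec_eq {v : R} (h : M *ᵥ ![0, v] = ![0, v]) :
    M 1 1 * v = v := by
  simpa [mulVec, dotProduct, Fin.sum_univ_two] using congrFun h 1

end Matrix

theorem Ideal.Quotient.mk_span_singleton_eq_iff_dvd_sub {R : Type*} [CommRing R] {x p q : R} :
    Ideal.Quotient.mk (Ideal.span {x}) p = Ideal.Quotient.mk (Ideal.span {x}) q ↔ x ∣ p - q := by
  rw [← Ideal.Quotient.eq_zero_iff_dvd, map_sub, sub_eq_zero]

theorem dvd_sub_one_of_mul_dvd_mul_sub_self {R : Type*} [CommRing R] [IsDomain R] {x y a : R}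
    (hx : x ≠ 0) (h : x * y ∣ a * x - x) : y ∣ a - 1 := by
  rw [show a * x - x = x * (a - 1) by ring] at h
  exact (mul_dvd_mul_iff_left hx).mp h

theorem exists_mk_eq_dvd_sub_one_of_mul_mk_eq {R : Type*} [CommRing R] [IsDomain R] {x y χ : R}
    (hx : x ≠ 0) (hχ : x * y ∣ χ) {α : R ⧸ Ideal.span {χ}}
    (h : α * Ideal.Quotient.mk _ x = Ideal.Quotient.mk _ x) :
    ∃ a, Ideal.Quotient.mk _ a = α ∧ y ∣ a - 1 := by
  obtain ⟨a, rfl⟩ := Ideal.Quotient.mk_surjective α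
  rw [← map_mul, Ideal.Quotient.mk_span_singleton_eq_iff_dvd_sub] at h
  exact ⟨a, rfl, dvd_sub_one_of_mul_dvd_mul_sub_self hx (hχ.trans h)⟩

/-- Proposition 2.2 (algebraic core): if a 2×2 matrix over `F[T]/(χ)`, `χ = i₁·i₂`,
fixes the vectors `(i₁ mod χ, 0)` and `(0, i₂ mod χ)`, and `c` lifts its trace,
then `i₂ ∣ c - 2`. -/
theorem stmt_0 (F : Type*) [Field F]
    (i₁ i₂ : F[X]) (hi₁ : i₁ ≠ 0) (hi₂ : i₂ ≠ 0) (hdvd : i₂ ∣ i₁)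
    (χ : F[X]) (hχ : χ = i₁ * i₂)
    (M : Matrix (Fin 2) (Fin 2) (F[X] ⧸ Ideal.span {χ}))
    (hv₁ : M.mulVec ![Ideal.Quotient.mk (Ideal.span {χ}) i₁, 0]
        = ![Ideal.Quotient.mk (Ideal.span {χ}) i₁, 0])
    (hv₂ : M.mulVec ![0, Ideal.Quotient.mk (Ideal.span {χ}) i₂]
        = ![0, Ideal.Quotient.mk (Ideal.span {χ}) i₂])
    (c : F[X]) (hc : Ideal.Quotient.mk (Ideal.span {χ}) c = M.trace) :
    i₂ ∣ c - 2 := by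
  obtain ⟨a, ha, ha₁⟩ := exists_mk_eq_dvd_sub_one_of_mul_mk_eq hi₁ hχ.symm.dvd
    (M.apply_zero_zero_mul_of_mulVec_eq hv₁)
  obtain ⟨d, hd, hd₁⟩ := exists_mk_eq_dvd_sub_one_of_mul_mk_eq hi₂
    ((mul_comm i₂ i₁).dvd.trans hχ.symm.dvd) (M.apply_one_one_mul_of_mulVec_eq hv₂)
  have hc_ad : i₂ ∣ c - (a + d) := by
    refine (hχ ▸ dvd_mul_left i₂ i₁).trans ?_
    rw [← Ideal.Quotient.mk_span_singleton_eq_iff_dvd_sub, hc, Matrix.trace_fin_two, map_add, ha, hd]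
  rw [show c - 2 = (c - (a + d)) + (a - 1) + (d - 1) by ring]
  exact (hc_ad.add ha₁).add (hdvd.trans hd₁)
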